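/- arXiv:1206.5477 — 7 statements merged into one kernel-verified Lean document; each statement's English description precedes it below -/
import Mathlib

section
/- Let G be a finite simple graph. The Levi graph of the incidence structure N(G) (the bipartite graph on the point class V(G) and the block class {N(v) : v ∈ V(G)}, with adjacency given by membership) is connected if and only if G is connected and G is not bipartite. -/
open SimpleGraph

/-- The Levi graph of the incidence structure `N(G)`: one vertex class is `V(G)`,
the other class is the set of distinct neighbourhoods `{N(v) : v ∈ V(G)}`,
with adjacency given by membership. -/
def leviGraph {V : Type*} (G : SimpleGraph V) :
    SimpleGraph (V ⊕ {S : Set V // ∃ v, S = G.neighborSet v}) where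
  Adj x y :=
    (∃ u S, x = Sum.inl u ∧ y = Sum.inr S ∧ u ∈ S.1) ∨
    (∃ u S, x = Sum.inr S ∧ y = Sum.inl u ∧ u ∈ S.1)
  symm := by
    constructor
    rintro x y (⟨u, S, rfl, rfl, h⟩ | ⟨u, S, rfl, rfl, h⟩)
    · exact Or.inr ⟨u, S, rfl, rfl, h⟩
    · exact Or.inl ⟨u, S, rfl, rfl, h⟩
  loopless := by
    constructor
    rintro x (⟨u, S, rfl, h, _⟩ | ⟨u, S, rfl, h, _⟩) <;> simp at h

/-!
A walk `inl u, N(v₁), inl x₁, N(v₂), …` of the Levi graph is a walk `u, v₁, x₁, v₂, …` of `G`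
read two steps at a time, so two points are joined in the Levi graph iff `G` has an even walk
between them, and a block `N(v)` is joined to a point iff it is nonempty. In a connected `G`,
even walks join every pair of vertices iff `G` has an odd closed walk, i.e. is not bipartite,
and a connected non-bipartite graph has no isolated vertex.
-/

section

variable {V : Type*} {G : SimpleGraph V}

def neighborBlock (G : SimpleGraph V) (v : V) : {S : Set V // ∃ v, S = G.neighborSet v} :=
  ⟨G.neighborSet v, v, rfl⟩

@[simp]
lemma leviGraph_adj_inl_inl {u w : V} : ¬ (leviGraph G).Adj (.inl u) (.inl w) := by
  simp [leviGraph]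

@[simp]
lemma leviGraph_adj_inr_inr {S T : {S : Set V // ∃ v, S = G.neighborSet v}} :
    ¬ (leviGraph G).Adj (.inr S) (.inr T) := by
  simp [leviGraph]

@[simp]
lemma leviGraph_adj_inl_inr {u : V} {S : {S : Set V // ∃ v, S = G.neighborSet v}} :
    (leviGraph G).Adj (.inl u) (.inr S) ↔ u ∈ S.1 := by
  refine ⟨?_, fun h => Or.inl ⟨u, S, rfl, rfl, h⟩⟩
  rintro (⟨a, T, ha, hT, h⟩ | ⟨_, _, h, _⟩)
  · cases ha; cases hT; exact h
  · cases h

@[simp]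
lemma leviGraph_adj_inr_inl {u : V} {S : {S : Set V // ∃ v, S = G.neighborSet v}} :
    (leviGraph G).Adj (.inr S) (.inl u) ↔ u ∈ S.1 :=
  (leviGraph G).adj_comm _ _ |>.trans leviGraph_adj_inl_inr

lemma leviGraph_adj_inl_neighborBlock {u v : V} :
    (leviGraph G).Adj (.inl u) (.inr (neighborBlock G v)) ↔ G.Adj v u :=
  leviGraph_adj_inl_inr

lemma leviGraph_adj_neighborBlock_inl {u v : V} :
    (leviGraph G).Adj (.inr (neighborBlock G v)) (.inl u) ↔ G.Adj v u :=
  leviGraph_adj_inr_inl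

lemma leviGraph_reachable_of_walk {u w : V} (p : G.Walk u w) :
    (Even p.length → (leviGraph G).Reachable (.inl u) (.inl w)) ∧
      (Odd p.length → (leviGraph G).Reachable (.inr (neighborBlock G u)) (.inl w)) := by
  induction p with
  | nil => exact ⟨fun _ => .rfl, fun h => absurd h (by simp)⟩
  | @cons u x w hux q ih =>
    rw [Walk.length_cons, Nat.even_add_one, Nat.not_even_iff_odd, Nat.odd_add_one,
      Nat.not_odd_iff_even]
    exact ⟨fun hq => (leviGraph_adj_inl_neighborBlock.2 hux.symm).reachable.trans (ih.2 hq),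
      fun hq => (leviGraph_adj_neighborBlock_inl.2 hux).reachable.trans (ih.1 hq)⟩

lemma exists_even_walk_of_leviGraph_reachable {u w : V}
    (h : (leviGraph G).Reachable (.inl u) (.inl w)) : ∃ p : G.Walk u w, Even p.length := by
  let P : V ⊕ {S : Set V // ∃ v, S = G.neighborSet v} → Prop :=
    Sum.elim (fun w => ∃ p : G.Walk u w, Even p.length)
      (fun S => ∃ v, S.1 = G.neighborSet v ∧ ∃ p : G.Walk u v, Odd p.length)
  suffices hP : ∀ x, Relation.ReflTransGen (leviGraph G).Adj (.inl u) x → P x from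
    hP _ ((reachable_iff_reflTransGen _ _).1 h)
  intro x hx
  induction hx with
  | refl => exact ⟨.nil, by simp⟩
  | @tail y z _ hyz ih =>
    rcases y with y | S <;> rcases z with z | T
    · exact absurd hyz leviGraph_adj_inl_inl
    · obtain ⟨p, hp⟩ := ih
      obtain ⟨v, hv⟩ := T.2
      have hvy : G.Adj v y := by simpa [hv] using leviGraph_adj_inl_inr.1 hyz
      exact ⟨v, hv, p.concat hvy.symm, by simpa [Nat.odd_add_one] using hp⟩
    · obtain ⟨v, hv, p, hp⟩ := ih
      have hvz : G.Adj v z := by simpa [hv] using leviGraph_adj_inr_inl.1 hyz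
      exact ⟨p.concat hvz, by simpa [Nat.even_add_one] using hp⟩
    · exact absurd hyz leviGraph_adj_inr_inr

theorem leviGraph_reachable_inl_inl_iff {u w : V} :
    (leviGraph G).Reachable (.inl u) (.inl w) ↔ ∃ p : G.Walk u w, Even p.length :=
  ⟨exists_even_walk_of_leviGraph_reachable, fun ⟨p, hp⟩ => (leviGraph_reachable_of_walk p).1 hp⟩

theorem leviGraph_connected_iff_forall :
    (leviGraph G).Connected ↔ Nonempty V ∧ (∀ v, ∃ w, G.Adj v w) ∧
      ∀ u w, ∃ p : G.Walk u w, Even p.length := by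
  constructor
  · intro hc
    refine ⟨?_, fun v => ?_, fun u w => leviGraph_reachable_inl_inl_iff.1 (hc _ _)⟩
    · obtain ⟨x | ⟨_, x, -⟩⟩ := hc.nonempty <;> exact ⟨x⟩
    · obtain ⟨p⟩ := hc (.inr (neighborBlock G v)) (.inl v)
      cases p with
      | @cons _ z _ h _ =>
        rcases z with z | T
        · exact ⟨z, leviGraph_adj_neighborBlock_inl.1 h⟩
        · exact absurd h leviGraph_adj_inr_inr
  · rintro ⟨⟨v⟩, hadj, heven⟩
    have reach_inl : ∀ x, ∃ u, (leviGraph G).Reachable x (.inl u) := by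
      rintro (u | ⟨S, v, rfl⟩)
      · exact ⟨u, .rfl⟩
      · obtain ⟨w, hvw⟩ := hadj v
        exact ⟨w, (leviGraph_adj_neighborBlock_inl.2 hvw).reachable⟩
    refine (connected_iff _).2 ⟨fun x y => ?_, ⟨.inl v⟩⟩
    obtain ⟨u, hu⟩ := reach_inl x
    obtain ⟨w, hw⟩ := reach_inl y
    exact hu.trans ((leviGraph_reachable_inl_inl_iff.2 (heven u w)).trans hw.symm)

lemma exists_even_walk_of_odd_loop {x u w : V} (c : G.Walk x x) (hc : Odd c.length)
    (hu : G.Reachable u x) (hw : G.Reachable x w) : ∃ p : G.Walk u w, Even p.length := by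
  obtain ⟨p⟩ := hu
  obtain ⟨q⟩ := hw
  by_cases hpq : Even (p.append q).length
  · exact ⟨_, hpq⟩
  · refine ⟨(p.append c).append q, ?_⟩
    simp only [Walk.length_append] at hpq ⊢
    grind

theorem connected_and_not_colorable_two_iff :
    G.Connected ∧ ¬ G.Colorable 2 ↔ Nonempty V ∧ (∀ v, ∃ w, G.Adj v w) ∧
      ∀ u w, ∃ p : G.Walk u w, Even p.length := by
  rw [two_colorable_iff_forall_loop_even]
  push Not
  constructor
  · rintro ⟨hconn, x, c, hc⟩
    rw [Nat.not_even_iff_odd] at hc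
    refine ⟨hconn.nonempty, fun v => ?_,
      fun u w => exists_even_walk_of_odd_loop c hc (hconn u x) (hconn x w)⟩
    obtain ⟨q⟩ := hconn v x
    have hqc : ¬ (q.append c).Nil := by
      rw [Walk.not_nil_iff_lt_length, Walk.length_append]
      exact Nat.add_pos_right _ hc.pos
    exact ⟨_, (q.append c).adj_snd hqc⟩
  · rintro ⟨⟨v⟩, hadj, heven⟩
    refine ⟨(connected_iff _).2 ⟨fun u w => (heven u w).elim fun p _ => p.reachable, ⟨v⟩⟩, v, ?_⟩
    obtain ⟨w, hvw⟩ := hadj v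
    obtain ⟨p, hp⟩ := heven w v
    exact ⟨.cons hvw p, by simpa [Nat.even_add_one] using hp⟩

end

theorem leviGraph_connected_iff_general {V : Type*} (G : SimpleGraph V) :
    (leviGraph G).Connected ↔ G.Connected ∧ ¬ G.Colorable 2 := by
  rw [leviGraph_connected_iff_forall, connected_and_not_colorable_two_iff]

/-- For a finite simple graph `G`, the Levi graph of `N(G)` is connected if and only if
`G` is connected and `G` is not bipartite (i.e. admits no proper 2-colouring). -/
theorem leviGraph_connected_iff {V : Type*} [Fintype V] (G : SimpleGraph V) :
    (leviGraph G).Connected ↔ G.Connected ∧ ¬ G.Colorable 2 :=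
  leviGraph_connected_iff_general G
end

section
/- Let G be a finite simple k-regular graph on n vertices (k ≥ 2) in which no two distinct vertices have the same neighbourhood. Then the incidence structure N(G) is a combinatorial (n_k) configuration — that is, any two distinct vertices of G have at most one common neighbour — if and only if the bipartite double cover D(G) of G contains no cycle of length 4. -/
/-!
Both conditions say that `G` has no 4-cycle. Two distinct vertices with two distinct common
neighbours are opposite corners of a 4-cycle of `G`. A 4-cycle of `D(G)` alternates between the
two sheets, so its opposite corners lie on the same sheet and project to distinct vertices of `G`,
giving a 4-cycle of `G`; conversely a 4-cycle `a b c d` of `G` lifts to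
`(a, 0) (b, 1) (c, 0) (d, 1)`.
-/

open SimpleGraph

/-- The bipartite double cover (Kronecker cover) of a simple graph. -/
def bipartiteDouble {V : Type*} (G : SimpleGraph V) : SimpleGraph (V × Bool) where
  Adj x y := G.Adj x.1 y.1 ∧ x.2 ≠ y.2
  symm := ⟨fun _ _ h => ⟨h.1.symm, h.2.symm⟩⟩
  loopless := ⟨fun _ h => h.2 rfl⟩

namespace SimpleGraph

variable {α : Type*} {G : SimpleGraph α}

theorem exists_isCycle_length_four_iff :
    (∃ (u : α) (w : G.Walk u u), w.IsCycle ∧ w.length = 4) ↔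
      ∃ a b c d, a ≠ c ∧ b ≠ d ∧ G.Adj a b ∧ G.Adj b c ∧ G.Adj c d ∧ G.Adj d a := by
  simp_rw [Walk.isCycle_def]
  refine ⟨fun ⟨_, .cons hab (.cons hbc (.cons hcd (.cons hda .nil))), ⟨_, _, hsupp⟩, _⟩ => ?_, ?_⟩
  · simp only [Walk.support_cons, Walk.support_nil, List.tail_cons, List.nodup_cons,
      List.mem_cons, List.not_mem_nil] at hsupp
    exact ⟨_, _, _, _, fun h => by simp_all, by tauto, hab, hbc, hcd, hda⟩
  · rintro ⟨a, b, c, d, hac, hbd, hab, hbc, hcd, hda⟩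
    have := hab.ne; have := hbc.ne; have := hcd.ne; have := hda.ne
    refine ⟨a, .cons hab (.cons hbc (.cons hcd (.cons hda .nil))), ⟨?_, by simp, ?_⟩, rfl⟩ <;>
      simp [Walk.isTrail_def] <;> grind

theorem forall_card_inter_neighborFinset_le_one_iff [DecidableEq α] [G.LocallyFinite] :
    (∀ u v, u ≠ v → (G.neighborFinset u ∩ G.neighborFinset v).card ≤ 1) ↔
      ¬ ∃ a b c d, a ≠ c ∧ b ≠ d ∧ G.Adj a b ∧ G.Adj b c ∧ G.Adj c d ∧ G.Adj d a := by
  simp only [Finset.card_le_one, Finset.mem_inter, mem_neighborFinset]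
  constructor
  · rintro h ⟨a, b, c, d, hac, hbd, hab, hbc, hcd, hda⟩
    exact hbd (h a c hac b ⟨hab, hbc.symm⟩ d ⟨hda.symm, hcd⟩)
  · intro h u v huv a ha b hb
    by_contra hab
    exact h ⟨u, a, v, b, huv, hab, ha.1, ha.2.symm, hb.2, hb.1.symm⟩

end SimpleGraph

section bipartiteDouble

variable {V : Type*} {G : SimpleGraph V}

@[simp]
theorem bipartiteDouble_adj {x y : V × Bool} :
    (bipartiteDouble G).Adj x y ↔ G.Adj x.1 y.1 ∧ x.2 ≠ y.2 :=
  Iff.rfl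

theorem exists_isCycle_length_four_bipartiteDouble_iff :
    (∃ (x : V × Bool) (w : (bipartiteDouble G).Walk x x), w.IsCycle ∧ w.length = 4) ↔
      ∃ (u : V) (w : G.Walk u u), w.IsCycle ∧ w.length = 4 := by
  simp only [exists_isCycle_length_four_iff, bipartiteDouble_adj]
  constructor
  · rintro ⟨a, b, c, d, hac, hbd, ⟨hab, hab'⟩, ⟨hbc, hbc'⟩, ⟨hcd, hcd'⟩, ⟨hda, -⟩⟩
    have same_sheet : ∀ {i j k : Bool}, i ≠ j → j ≠ k → i = k := by decide
    have hac' : a.1 ≠ c.1 := fun h => hac (Prod.ext h (same_sheet hab' hbc'))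
    have hbd' : b.1 ≠ d.1 := fun h => hbd (Prod.ext h (same_sheet hbc' hcd'))
    exact ⟨a.1, b.1, c.1, d.1, hac', hbd', hab, hbc, hcd, hda⟩
  · rintro ⟨a, b, c, d, hac, hbd, hab, hbc, hcd, hda⟩
    exact ⟨(a, false), (b, true), (c, false), (d, true), by simpa, by simpa,
      ⟨hab, by simp⟩, ⟨hbc, by simp⟩, ⟨hcd, by simp⟩, ⟨hda, by simp⟩⟩

end bipartiteDouble

theorem config_iff_no_four_cycle_in_cover_general {V : Type*} [Fintype V] [DecidableEq V]
    (G : SimpleGraph V) [DecidableRel G.Adj] :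
    (∀ u v : V, u ≠ v → (G.neighborFinset u ∩ G.neighborFinset v).card ≤ 1) ↔
      ¬ ∃ (x : V × Bool) (w : (bipartiteDouble G).Walk x x), w.IsCycle ∧ w.length = 4 := by
  rw [exists_isCycle_length_four_bipartiteDouble_iff, exists_isCycle_length_four_iff]
  exact forall_card_inter_neighborFinset_le_one_iff

/-- Let `G` be a finite simple `k`-regular graph (`k ≥ 2`) in which no two distinct
vertices have the same neighbourhood.  Then `N(G)` is a combinatorial `(n_k)`
configuration — i.e. any two distinct vertices have at most one common neighbour —
if and only if the bipartite double cover `D(G)` contains no cycle of length 4. -/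
theorem config_iff_no_four_cycle_in_cover {V : Type*} [Fintype V] [DecidableEq V]
    (G : SimpleGraph V) [DecidableRel G.Adj] (k : ℕ) (hk : 2 ≤ k)
    (hreg : G.IsRegularOfDegree k)
    (hadm : ∀ u v : V, G.neighborSet u = G.neighborSet v → u = v) :
    (∀ u v : V, u ≠ v → (G.neighborFinset u ∩ G.neighborFinset v).card ≤ 1) ↔
      ¬ ∃ (x : V × Bool) (w : (bipartiteDouble G).Walk x x), w.IsCycle ∧ w.length = 4 :=
  config_iff_no_four_cycle_in_cover_general G
end

section
/- Let G be a finite simple graph in which no two distinct vertices have the same neighbourhood. Then the configuration obtained from G by the V-construction is combinatorially self-polar: its Levi graph admits a graph automorphism of order two that interchanges the two bipartition classes (the class of points V(G) and the class of blocks {N(v) : v ∈ V(G)}). -/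
open SimpleGraph

namespace SimpleGraph

variable {V : Type*} (G : SimpleGraph V)

@[simp]
lemma leviGraph_adj_inl_inr {u : V} {S : {S : Set V // ∃ v, S = G.neighborSet v}} :
    (leviGraph G).Adj (Sum.inl u) (Sum.inr S) ↔ u ∈ S.1 := by
  refine ⟨?_, fun h => Or.inl ⟨u, S, rfl, rfl, h⟩⟩
  rintro (⟨_, _, ⟨⟩, ⟨⟩, h⟩ | ⟨_, _, ⟨⟩, _⟩)
  exact h

@[simp]
lemma leviGraph_adj_inr_inl {u : V} {S : {S : Set V // ∃ v, S = G.neighborSet v}} :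
    (leviGraph G).Adj (Sum.inr S) (Sum.inl u) ↔ u ∈ S.1 := by
  rw [adj_comm, leviGraph_adj_inl_inr]

@[simp]
lemma leviGraph_not_adj_inl_inl (u v : V) : ¬(leviGraph G).Adj (Sum.inl u) (Sum.inl v) := by
  simp [leviGraph]

@[simp]
lemma leviGraph_not_adj_inr_inr (S T : {S : Set V // ∃ v, S = G.neighborSet v}) :
    ¬(leviGraph G).Adj (Sum.inr S) (Sum.inr T) := by
  simp [leviGraph]

noncomputable def neighborSetEquiv (h : Function.Injective G.neighborSet) :
    V ≃ {S : Set V // ∃ v, S = G.neighborSet v} :=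
  Equiv.ofBijective (fun v => ⟨G.neighborSet v, v, rfl⟩)
    ⟨fun _ _ huv => h (congrArg Subtype.val huv),
      fun ⟨_, v, hS⟩ => ⟨v, Subtype.ext hS.symm⟩⟩

@[simp]
lemma neighborSetEquiv_apply (h : Function.Injective G.neighborSet) (v : V) :
    (neighborSetEquiv G h v).1 = G.neighborSet v :=
  rfl

@[simp]
lemma neighborSet_neighborSetEquiv_symm (h : Function.Injective G.neighborSet)
    (S : {S : Set V // ∃ v, S = G.neighborSet v}) :
    G.neighborSet ((neighborSetEquiv G h).symm S) = S.1 := by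
  conv_rhs => rw [← (neighborSetEquiv G h).apply_symm_apply S]
  rfl

lemma adj_neighborSetEquiv_symm_iff (h : Function.Injective G.neighborSet)
    (u : V) (S : {S : Set V // ∃ v, S = G.neighborSet v}) :
    G.Adj u ((neighborSetEquiv G h).symm S) ↔ u ∈ S.1 := by
  rw [← neighborSet_neighborSetEquiv_symm G h S, mem_neighborSet, adj_comm]

noncomputable def leviPolarity (h : Function.Injective G.neighborSet) :
    leviGraph G ≃g leviGraph G where
  toEquiv := ((neighborSetEquiv G h).sumCongr (neighborSetEquiv G h).symm).trans
    (Equiv.sumComm _ _)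
  map_rel_iff' := by
    rintro (u | S) (v | T) <;> simp [adj_neighborSetEquiv_symm_iff]

@[simp]
lemma leviPolarity_inl (h : Function.Injective G.neighborSet) (u : V) :
    leviPolarity G h (Sum.inl u) = Sum.inr (neighborSetEquiv G h u) :=
  rfl

@[simp]
lemma leviPolarity_inr (h : Function.Injective G.neighborSet)
    (S : {S : Set V // ∃ v, S = G.neighborSet v}) :
    leviPolarity G h (Sum.inr S) = Sum.inl ((neighborSetEquiv G h).symm S) :=
  rfl

lemma leviPolarity_leviPolarity (h : Function.Injective G.neighborSet)
    (x : V ⊕ {S : Set V // ∃ v, S = G.neighborSet v}) :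
    leviPolarity G h (leviPolarity G h x) = x := by
  rcases x with u | S <;> simp

end SimpleGraph

theorem V_construction_self_polar_general {V : Type*} (G : SimpleGraph V)
    (hadm : ∀ u v : V, G.neighborSet u = G.neighborSet v → u = v) :
    ∃ φ : leviGraph G ≃g leviGraph G,
      (∀ x, φ (φ x) = x) ∧
      (∀ u : V, ∃ S, φ (Sum.inl u) = Sum.inr S) ∧
      (∀ S, ∃ u : V, φ (Sum.inr S) = Sum.inl u) :=
  ⟨leviPolarity G hadm, leviPolarity_leviPolarity G hadm,
    fun u => ⟨_, leviPolarity_inl G hadm u⟩, fun S => ⟨_, leviPolarity_inr G hadm S⟩⟩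

/-- The configuration obtained by the V-construction from an admissible finite graph `G`
(no two distinct vertices share the same neighbourhood) is combinatorially self-polar:
its Levi graph has an automorphism of order two interchanging the class of points `V(G)`
with the class of blocks `{N(v) : v ∈ V(G)}`. -/
theorem V_construction_self_polar {V : Type*} [Fintype V] (G : SimpleGraph V)
    (hadm : ∀ u v : V, G.neighborSet u = G.neighborSet v → u = v) :
    ∃ φ : leviGraph G ≃g leviGraph G,
      (∀ x, φ (φ x) = x) ∧
      (∀ u : V, ∃ S, φ (Sum.inl u) = Sum.inr S) ∧
      (∀ S, ∃ u : V, φ (Sum.inr S) = Sum.inl u) :=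
  V_construction_self_polar_general G hadm
end

section
/- Let S be the unit sphere in ℝ³ centered at the origin, let N = (0,0,1) be the north pole, and let π denote stereographic projection from N onto the plane {z = 0}, identified with ℝ². Let P be an affine plane in ℝ³ with N ∉ P such that S ∩ P contains at least two points (so S ∩ P is a circle on S not through N). Then the image π(S ∩ P) is a circle in the plane: there exist a point c ∈ ℝ² and a radius r > 0 such that π(S ∩ P) equals the metric sphere of center c and radius r in ℝ². -/
open Metric

/-- Stereographic projection from the north pole `(0,0,1)` of the unit sphere in `ℝ³`
onto the plane `{z = 0}`, identified with `ℝ²`: the image of `p` is the unique point of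
that plane on the line through the north pole and `p`. -/
noncomputable def stereoProj :
    EuclideanSpace ℝ (Fin 3) → EuclideanSpace ℝ (Fin 2) := fun p =>
  (EuclideanSpace.equiv (Fin 2) ℝ).symm ![p 0 / (1 - p 2), p 1 / (1 - p 2)]

/-- The north pole `N = (0,0,1)` of the unit sphere in `ℝ³`. -/
noncomputable def northPole : EuclideanSpace ℝ (Fin 3) :=
  (EuclideanSpace.equiv (Fin 3) ℝ).symm ![0, 0, 1]

/-!
Inverse stereographic projection is `q ↦ (2 q₀, 2 q₁, ‖q‖² - 1) / (‖q‖² + 1)`, so the image of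
`S ∩ P` is the preimage of the plane `P = {x | ⟪n, x⟫ = d}` under it. Clearing the denominator,
this preimage is `{q | (n₂ - d) ‖q‖² + 2 (n₀ q₀ + n₁ q₁) = n₂ + d}`, and `n₂ ≠ d` because
`N ∉ P`, so completing the square exhibits it as `{q | dist q c ^ 2 = R}`. Stereographic
projection is injective on `S \ {N}`, so this set has two points, which forces `R > 0`.
-/

open Module

theorem AffineSubspace.exists_eq_setOf_inner_eq {V : Type*} [NormedAddCommGroup V]
    [InnerProductSpace ℝ V] [FiniteDimensional ℝ V] (P : AffineSubspace ℝ V)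
    (hP : finrank ℝ P.direction + 1 = finrank ℝ V) (hne : (P : Set V).Nonempty) :
    ∃ (n : V) (d : ℝ), (P : Set V) = {x | inner ℝ n x = d} := by
  obtain ⟨x₀, hx₀⟩ := hne
  have hperp : finrank ℝ P.directionᗮ = 1 := by
    have := P.direction.finrank_add_finrank_orthogonal
    omega
  obtain ⟨n, hn, hn0⟩ := P.directionᗮ.exists_mem_ne_zero_of_ne_bot
    (Submodule.one_le_finrank_iff.mp hperp.ge)
  have hdir : P.direction = (ℝ ∙ n)ᗮ := by
    rw [← eq_span_singleton_of_mem_of_finrank_eq_one hperp hn hn0,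
      Submodule.orthogonal_orthogonal]
  refine ⟨n, inner ℝ n x₀, Set.ext fun x => ?_⟩
  rw [SetLike.mem_coe, ← AffineSubspace.vsub_right_mem_direction_iff_mem hx₀, hdir,
    Submodule.mem_orthogonal_singleton_iff_inner_right, vsub_eq_sub, inner_sub_right,
    sub_eq_zero]
  rfl

theorem exists_pos_eq_sphere_of_nontrivial_setOf_dist_sq {X : Type*} [MetricSpace X] {c : X} {R : ℝ}
    (h : {x | dist x c ^ 2 = R}.Nontrivial) :
    ∃ r, 0 < r ∧ {x | dist x c ^ 2 = R} = sphere c r := by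
  obtain ⟨x, hx, y, hy, hxy⟩ := h
  have hR : 0 < R := by
    by_contra! hR
    have hc : ∀ z, dist z c ^ 2 = R → z = c := fun z hz =>
      dist_le_zero.1 (by nlinarith [dist_nonneg (x := z) (y := c)])
    exact hxy ((hc x hx).trans (hc y hy).symm)
  refine ⟨√R, Real.sqrt_pos.2 hR, Set.ext fun z => ?_⟩
  rw [mem_sphere, eq_comm, Real.sqrt_eq_iff_eq_sq hR.le dist_nonneg, eq_comm]
  rfl

theorem EuclideanSpace.dist_sq_fin_two (p q : EuclideanSpace ℝ (Fin 2)) :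
    dist p q ^ 2 = (p 0 - q 0) ^ 2 + (p 1 - q 1) ^ 2 := by
  rw [EuclideanSpace.dist_eq, Real.sq_sqrt (by positivity)]
  simp [Fin.sum_univ_two, Real.dist_eq, sq_abs]

theorem EuclideanSpace.inner_fin_three (p q : EuclideanSpace ℝ (Fin 3)) :
    inner ℝ p q = p 0 * q 0 + p 1 * q 1 + p 2 * q 2 := by
  simp [PiLp.inner_apply, Fin.sum_univ_three]
  ring

theorem mem_unit_sphere_fin_three_iff (p : EuclideanSpace ℝ (Fin 3)) :
    p ∈ sphere (0 : EuclideanSpace ℝ (Fin 3)) 1 ↔ p 0 ^ 2 + p 1 ^ 2 + p 2 ^ 2 = 1 := by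
  rw [mem_sphere_zero_iff_norm, ← pow_eq_one_iff_of_nonneg (norm_nonneg p) two_ne_zero,
    EuclideanSpace.norm_sq_eq]
  simp [Fin.sum_univ_three]

noncomputable def stereoProjInv (q : EuclideanSpace ℝ (Fin 2)) : EuclideanSpace ℝ (Fin 3) :=
  !₂[2 * q 0 / (q 0 ^ 2 + q 1 ^ 2 + 1), 2 * q 1 / (q 0 ^ 2 + q 1 ^ 2 + 1),
    (q 0 ^ 2 + q 1 ^ 2 - 1) / (q 0 ^ 2 + q 1 ^ 2 + 1)]

theorem stereoProjInv_mem_sphere (q : EuclideanSpace ℝ (Fin 2)) :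
    stereoProjInv q ∈ sphere (0 : EuclideanSpace ℝ (Fin 3)) 1 := by
  rw [mem_unit_sphere_fin_three_iff]
  simp only [stereoProjInv, Matrix.cons_val_zero, Matrix.cons_val_one, Matrix.cons_val]
  field_simp
  ring

theorem stereoProj_stereoProjInv (q : EuclideanSpace ℝ (Fin 2)) :
    stereoProj (stereoProjInv q) = q := by
  have hs : q 0 ^ 2 + q 1 ^ 2 + 1 ≠ 0 := by positivity
  ext i
  fin_cases i <;> simp [stereoProj, stereoProjInv] <;> field_simp <;> ring

theorem eq_northPole_of_mem_sphere {p : EuclideanSpace ℝ (Fin 3)}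
    (hp : p ∈ sphere (0 : EuclideanSpace ℝ (Fin 3)) 1) (h2 : p 2 = 1) : p = northPole := by
  rw [mem_unit_sphere_fin_three_iff, h2] at hp
  ext i
  fin_cases i <;> simp [northPole, h2] <;> nlinarith

theorem stereoProjInv_stereoProj {p : EuclideanSpace ℝ (Fin 3)}
    (hp : p ∈ sphere (0 : EuclideanSpace ℝ (Fin 3)) 1) (hN : p ≠ northPole) :
    stereoProjInv (stereoProj p) = p := by
  have h2 : 1 - p 2 ≠ 0 := sub_ne_zero.2 fun h => hN (eq_northPole_of_mem_sphere hp h.symm)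
  rw [mem_unit_sphere_fin_three_iff] at hp
  have hs : (p 0 / (1 - p 2)) ^ 2 + (p 1 / (1 - p 2)) ^ 2 + 1 = 2 / (1 - p 2) := by
    field_simp
    linear_combination hp
  ext i
  fin_cases i
  · simp [stereoProj, stereoProjInv, hs]
    field_simp
  · simp [stereoProj, stereoProjInv, hs]
    field_simp
  · simp [stereoProj, stereoProjInv, hs]
    field_simp
    linear_combination hp

theorem injOn_stereoProj :
    Set.InjOn stereoProj (sphere (0 : EuclideanSpace ℝ (Fin 3)) 1 \ {northPole}) :=
  fun p hp p' hp' h => by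
    rw [← stereoProjInv_stereoProj hp.1 hp.2, h, stereoProjInv_stereoProj hp'.1 hp'.2]

theorem stereoProj_image_sphere_inter {A : Set (EuclideanSpace ℝ (Fin 3))}
    (hA : northPole ∉ A) :
    stereoProj '' (sphere 0 1 ∩ A) = stereoProjInv ⁻¹' A := by
  ext q
  constructor
  · rintro ⟨p, ⟨hpS, hpA⟩, rfl⟩
    rwa [Set.mem_preimage, stereoProjInv_stereoProj hpS (ne_of_mem_of_not_mem hpA hA)]
  · exact fun hq => ⟨stereoProjInv q, ⟨stereoProjInv_mem_sphere q, hq⟩, stereoProj_stereoProjInv q⟩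

theorem preimage_stereoProjInv_setOf_inner_eq (n : EuclideanSpace ℝ (Fin 3)) {d : ℝ}
    (h : n 2 ≠ d) :
    ∃ c R, stereoProjInv ⁻¹' {x | inner ℝ n x = d} = {q | dist q c ^ 2 = R} := by
  set a := n 2 - d
  have ha : a ≠ 0 := sub_ne_zero.2 h
  -- completing the square in `a ‖q‖² + 2 (n 0 q 0 + n 1 q 1) = n 2 + d`
  set c : EuclideanSpace ℝ (Fin 2) := !₂[-n 0 / a, -n 1 / a]
  set R := (n 0 ^ 2 + n 1 ^ 2) / a ^ 2 + (n 2 + d) / a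
  refine ⟨c, R, Set.ext fun q => ?_⟩
  have hs : q 0 ^ 2 + q 1 ^ 2 + 1 ≠ 0 := by positivity
  have key : inner ℝ n (stereoProjInv q) - d =
      a / (q 0 ^ 2 + q 1 ^ 2 + 1) * (dist q c ^ 2 - R) := by
    rw [EuclideanSpace.dist_sq_fin_two, EuclideanSpace.inner_fin_three]
    simp only [stereoProjInv, c, R, a, Matrix.cons_val_zero, Matrix.cons_val_one,
      Matrix.cons_val, Matrix.cons_val_fin_one]
    field_simp
    ring
  change inner ℝ n (stereoProjInv q) = d ↔ dist q c ^ 2 = R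
  rw [← sub_eq_zero, key, ← sub_eq_zero (a := dist q c ^ 2)]
  simp [ha, hs]

/-- Let `P` be an affine plane in `ℝ³` not containing the north pole `N = (0,0,1)` and
meeting the unit sphere `S` in at least two points (so `S ∩ P` is a circle on `S` not
through `N`).  Then the stereographic image of `S ∩ P` is a circle in the plane `ℝ²`. -/
theorem stereoProj_image_circle (P : AffineSubspace ℝ (EuclideanSpace ℝ (Fin 3)))
    (hP : Module.finrank ℝ P.direction = 2)
    (hN : northPole ∉ P)
    (htwo : (sphere (0 : EuclideanSpace ℝ (Fin 3)) 1 ∩ (P : Set (EuclideanSpace ℝ (Fin 3)))).Nontrivial) :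
    ∃ (c : EuclideanSpace ℝ (Fin 2)) (r : ℝ), 0 < r ∧
      stereoProj '' (sphere (0 : EuclideanSpace ℝ (Fin 3)) 1 ∩ P) = sphere c r := by
  obtain ⟨n, d, hPnd⟩ := P.exists_eq_setOf_inner_eq (by simp [hP])
    (htwo.nonempty.mono Set.inter_subset_right)
  have hNd : n 2 ≠ d := by
    rintro rfl
    apply hN
    rw [← SetLike.mem_coe, hPnd]
    simp [northPole, EuclideanSpace.inner_fin_three]
  obtain ⟨c, R, hcR⟩ := preimage_stereoProjInv_setOf_inner_eq n hNd
  have himage : stereoProj '' (sphere 0 1 ∩ P) = {q | dist q c ^ 2 = R} := by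
    rw [stereoProj_image_sphere_inter hN, ← hcR, hPnd]
  have hnontriv : (stereoProj '' (sphere 0 1 ∩ P)).Nontrivial :=
    htwo.image_of_injOn <| injOn_stereoProj.mono <|
      Set.subset_sdiff_singleton Set.inter_subset_left fun h => hN h.2
  obtain ⟨r, hr, hsphere⟩ := exists_pos_eq_sphere_of_nontrivial_setOf_dist_sq (himage ▸ hnontriv)
  exact ⟨c, r, hr, himage.trans hsphere⟩
end

section
/- Every combinatorial (n_3) configuration can be realized by points and circles in the Euclidean plane: if P is a finite set of n points and B is a family of n blocks, each block a 3-element subset of P, such that every point lies in exactly 3 blocks and any two distinct points lie in at most one common block, then there exist an injective map f : P → ℝ² and an injective assignment of a circle (metric sphere of positive radius) c_b ⊆ ℝ² to each block b ∈ B such that for every point p and block b, f(p) ∈ c_b if and only if p ∈ b. -/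
/-!
Place the points on the parabola `y = x²` at distinct positive parameters. Substituting
`y = x²` into the equation of a circle gives a quartic in `x` without cubic term, so the
parameters of the (at most four) intersection points sum to zero. Hence the circle through
the parameters `a, b, c` of a block meets the parabola once more only at `-(a + b + c) < 0`,
and passes through no other point of the configuration.
-/

open Metric

noncomputable section

def parabola (x : ℝ) : EuclideanSpace ℝ (Fin 2) := !₂[x, x ^ 2]

lemma parabola_injective : Function.Injective parabola := by
  intro x y h
  simpa [parabola] using congrArg (fun v : EuclideanSpace ℝ (Fin 2) => v 0) h

/-- The centre of the circle through `parabola a`, `parabola b`, `parabola c`, read off by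
Vieta from the quartic `(x - a)(x - b)(x - c)(x + a + b + c)`. -/
def parabolaCircumcenter (a b c : ℝ) : EuclideanSpace ℝ (Fin 2) :=
  !₂[(a * b * c - (a + b + c) * (a * b + a * c + b * c)) / 2,
    (1 - (a * b + a * c + b * c) + (a + b + c) ^ 2) / 2]

lemma dist_parabola_circumcenter_sq_sub (a b c x : ℝ) :
    dist (parabola x) (parabolaCircumcenter a b c) ^ 2
        - dist (parabola a) (parabolaCircumcenter a b c) ^ 2
      = (x - a) * (x - b) * (x - c) * (x + (a + b + c)) := by
  simp only [EuclideanSpace.dist_eq, parabola, parabolaCircumcenter, Fin.sum_univ_two]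
  rw [Real.sq_sqrt (by positivity), Real.sq_sqrt (by positivity)]
  simp only [Matrix.cons_val_zero, Matrix.cons_val_one, Real.dist_eq, sq_abs]
  ring

lemma parabola_mem_sphere_circumcenter_iff {a b c x : ℝ} (hx : x + (a + b + c) ≠ 0) :
    parabola x ∈ sphere (parabolaCircumcenter a b c)
        (dist (parabola a) (parabolaCircumcenter a b c)) ↔ x = a ∨ x = b ∨ x = c := by
  rw [mem_sphere, ← sq_eq_sq₀ dist_nonneg dist_nonneg, ← sub_eq_zero,
    dist_parabola_circumcenter_sq_sub]
  simp only [mul_eq_zero, hx, or_false, sub_eq_zero, or_assoc]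

lemma dist_parabola_circumcenter_pos {a b : ℝ} (c : ℝ) (hab : a ≠ b) :
    0 < dist (parabola a) (parabolaCircumcenter a b c) := by
  refine dist_pos.2 fun ha => hab (parabola_injective ?_)
  have hb : dist (parabola b) (parabolaCircumcenter a b c) ^ 2 = 0 := by
    have := dist_parabola_circumcenter_sq_sub a b c b
    rw [ha, dist_self] at this
    linear_combination this
  rw [ha, (dist_eq_zero.1 (pow_eq_zero_iff two_ne_zero |>.1 hb))]

lemma exists_sphere_inter_parabola_eq (s : Finset ℝ) (hs : s.card = 3)
    (hpos : ∀ x ∈ s, 0 < x) :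
    ∃ (c : EuclideanSpace ℝ (Fin 2)) (r : ℝ), 0 < r ∧
      ∀ x, 0 < x → (parabola x ∈ sphere c r ↔ x ∈ s) := by
  obtain ⟨a, b, c, hab, -, -, rfl⟩ := Finset.card_eq_three.1 hs
  have ha : 0 < a := hpos a (by simp)
  have hb : 0 < b := hpos b (by simp)
  have hc : 0 < c := hpos c (by simp)
  refine ⟨parabolaCircumcenter a b c, dist (parabola a) (parabolaCircumcenter a b c),
    dist_parabola_circumcenter_pos c hab, fun x hx => ?_⟩
  rw [parabola_mem_sphere_circumcenter_iff (by positivity)]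
  simp

lemma exists_injective_pos (P : Type*) [Countable P] :
    ∃ t : P → ℝ, Function.Injective t ∧ ∀ p, 0 < t p := by
  obtain ⟨g, hg⟩ := Countable.exists_injective_nat P
  refine ⟨fun p => g p + 1, fun p q h => hg ?_, fun p => by positivity⟩
  exact_mod_cast add_right_cancel h

end

theorem n3_configuration_point_circle_realizable_general
    (P : Type*) [Fintype P]
    (blocks : Finset (Finset P))
    (hblock3 : ∀ b ∈ blocks, b.card = 3) :
    ∃ (f : P → EuclideanSpace ℝ (Fin 2))
      (ctr : Finset P → EuclideanSpace ℝ (Fin 2)) (rad : Finset P → ℝ),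
      Function.Injective f ∧
      (∀ b ∈ blocks, 0 < rad b) ∧
      (∀ b ∈ blocks, ∀ b' ∈ blocks,
        sphere (ctr b) (rad b) = sphere (ctr b') (rad b') → b = b') ∧
      (∀ (p : P), ∀ b ∈ blocks, (f p ∈ sphere (ctr b) (rad b) ↔ p ∈ b)) := by
  obtain ⟨t, ht_inj, ht_pos⟩ := exists_injective_pos P
  have h_circle : ∀ b : Finset P, ∃ (c : EuclideanSpace ℝ (Fin 2)) (r : ℝ),
      b ∈ blocks → 0 < r ∧ ∀ p, (parabola (t p) ∈ sphere c r ↔ p ∈ b) := by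
    intro b
    by_cases hb : b ∈ blocks
    · obtain ⟨c, r, hr, hcr⟩ := exists_sphere_inter_parabola_eq (b.image t)
        (by rw [Finset.card_image_of_injective _ ht_inj, hblock3 b hb])
        (by simp only [Finset.mem_image]; rintro _ ⟨p, -, rfl⟩; exact ht_pos p)
      exact ⟨c, r, fun _ => ⟨hr, fun p => by rw [hcr _ (ht_pos p), ht_inj.mem_finset_image]⟩⟩
    · exact ⟨0, 0, fun h => absurd h hb⟩
  choose ctr rad h_circle using h_circle
  refine ⟨parabola ∘ t, ctr, rad, parabola_injective.comp ht_inj,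
    fun b hb => (h_circle b hb).1, fun b hb b' hb' h_eq => ?_, fun p b hb => (h_circle b hb).2 p⟩
  ext p
  rw [← (h_circle b hb).2, ← (h_circle b' hb').2, h_eq]

/-- Every combinatorial `(n₃)` configuration can be realized by points and circles in the
Euclidean plane: given `n` points and a family of `n` blocks, each a 3-element set of
points, such that every point lies in exactly 3 blocks and any two distinct points lie in
at most one common block, there are an injective placement of the points in `ℝ²` and an
injective assignment of circles (metric spheres of positive radius) to the blocks
realizing exactly the given incidences. -/
theorem n3_configuration_point_circle_realizable
    (n : ℕ) (P : Type*) [Fintype P] [DecidableEq P]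
    (blocks : Finset (Finset P))
    (hnP : Fintype.card P = n)
    (hnB : blocks.card = n)
    (hblock3 : ∀ b ∈ blocks, b.card = 3)
    (hpoint3 : ∀ p : P, (blocks.filter (fun b => p ∈ b)).card = 3)
    (hlineal : ∀ p q : P, p ≠ q → (blocks.filter (fun b => p ∈ b ∧ q ∈ b)).card ≤ 1) :
    ∃ (f : P → EuclideanSpace ℝ (Fin 2))
      (ctr : Finset P → EuclideanSpace ℝ (Fin 2)) (rad : Finset P → ℝ),
      Function.Injective f ∧
      (∀ b ∈ blocks, 0 < rad b) ∧
      (∀ b ∈ blocks, ∀ b' ∈ blocks,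
        sphere (ctr b) (rad b) = sphere (ctr b') (rad b') → b = b') ∧
      (∀ (p : P), ∀ b ∈ blocks, (f p ∈ sphere (ctr b) (rad b) ↔ p ∈ b)) :=
  n3_configuration_point_circle_realizable_general P blocks hblock3
end

section
/- For every d ≥ 1, the d-dimensional hypercube graph Q_d is a unit-distance graph in the plane: there exists an injective map f : (Fin d → Bool) → ℝ² such that whenever two vertices of Q_d differ in exactly one coordinate, their images under f are at Euclidean distance 1. -/
open SimpleGraph

/-- The `d`-dimensional hypercube graph `Q_d`: vertices are functions `Fin d → Bool`,
two vertices adjacent iff they differ in exactly one coordinate. -/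
def cubeGraph (d : ℕ) : SimpleGraph (Fin d → Bool) where
  Adj x y := (Finset.univ.filter fun i => x i ≠ y i).card = 1
  symm := by
    constructor
    intro x y h
    have : (Finset.univ.filter fun i => y i ≠ x i)
        = (Finset.univ.filter fun i => x i ≠ y i) :=
      Finset.filter_congr fun i _ => ne_comm
    rw [this]
    exact h
  loopless := by constructor; intro x h; simp at h

/-!
Send a vertex `x` to the sum of those of `d` chosen unit vectors `v i` with `x i = true`.
Adjacent vertices then map to points differing by `± v i`, hence at distance 1. Injectivity
holds as soon as all subset sums are distinct, and such `v i` can be chosen one at a time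
since the unit circle is infinite: the new vector only has to avoid the finitely many
differences of subset sums of the previous ones.
-/

theorem cubeGraph_adj_iff {d : ℕ} {x y : Fin d → Bool} :
    (cubeGraph d).Adj x y ↔ ∃ i, x i ≠ y i ∧ ∀ j ≠ i, x j = y j := by
  simp only [cubeGraph, Finset.card_eq_one, Finset.eq_singleton_iff_unique_mem,
    Finset.mem_filter, Finset.mem_univ, true_and]
  refine exists_congr fun i => and_congr_right fun _ => forall_congr' fun j => ?_
  rw [not_imp_comm]

section SubsetSum

variable {ι E : Type*} [Fintype ι] [AddCommGroup E]

def subsetSum (v : ι → E) (x : ι → Bool) : E :=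
  ∑ i, if x i then v i else 0

theorem subsetSum_sub_subsetSum_eq {v : ι → E} {x y : ι → Bool} {i : ι}
    (h : ∀ j ≠ i, x j = y j) :
    subsetSum v x - subsetSum v y = (if x i then v i else 0) - (if y i then v i else 0) := by
  rw [subsetSum, subsetSum, ← Finset.sum_sub_distrib]
  exact Finset.sum_eq_single i (fun j _ hj => by rw [h j hj, sub_self]) (by simp)

theorem norm_subsetSum_sub_subsetSum {F : Type*} [NormedAddCommGroup F] {v : ι → F}
    {x y : ι → Bool} {i : ι} (hi : x i ≠ y i) (h : ∀ j ≠ i, x j = y j) :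
    ‖subsetSum v x - subsetSum v y‖ = ‖v i‖ := by
  rw [subsetSum_sub_subsetSum_eq h]
  cases hx : x i <;> cases hy : y i <;> simp_all

theorem subsetSum_snoc {d : ℕ} (v : Fin d → E) (w : E) (x : Fin d → Bool) (b : Bool) :
    subsetSum (Fin.snoc v w : Fin (d + 1) → E) (Fin.snoc x b : Fin (d + 1) → Bool)
      = subsetSum v x + if b then w else 0 := by
  simp [subsetSum, Fin.sum_univ_castSucc]

theorem exists_injective_subsetSum {S : Set E} (hS : S.Infinite) (d : ℕ) :
    ∃ v : Fin d → E, (∀ i, v i ∈ S) ∧ Function.Injective (subsetSum v) := by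
  induction d with
  | zero => exact ⟨Fin.elim0, fun i => i.elim0, fun x y _ => funext fun i => i.elim0⟩
  | succ d ih =>
    obtain ⟨v, hvS, hinj⟩ := ih
    let differences := Set.range fun p : (Fin d → Bool) × (Fin d → Bool) =>
      subsetSum v p.1 - subsetSum v p.2
    obtain ⟨w, hwS, hw⟩ := (hS.sdiff (Set.toFinite differences)).nonempty
    have hw_avoid (x y : Fin d → Bool) : subsetSum v x + w ≠ subsetSum v y := fun h =>
      hw ⟨(y, x), by simp [← h]⟩
    refine ⟨Fin.snoc v w, Fin.lastCases (by simpa) (by simpa), ?_⟩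
    intro x y hxy
    induction x using Fin.snocCases with | snoc x a =>
    induction y using Fin.snocCases with | snoc y b =>
    rw [subsetSum_snoc, subsetSum_snoc] at hxy
    cases a <;> cases b <;>
      simp only [Bool.false_eq_true, ↓reduceIte, add_zero, add_left_inj] at hxy
    · rw [hinj hxy]
    · exact absurd hxy.symm (hw_avoid y x)
    · exact absurd hxy (hw_avoid x y)
    · rw [hinj hxy]

end SubsetSum

theorem sphere_infinite {E : Type*} [NormedAddCommGroup E] [NormedSpace ℝ E]
    (h : 1 < Module.rank ℝ E) (x : E) {r : ℝ} (hr : 0 < r) : (Metric.sphere x r).Infinite := by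
  have : Nontrivial E := rank_pos_iff_nontrivial.1 (zero_lt_one.trans h)
  obtain ⟨u, hu⟩ := (NormedSpace.sphere_nonempty (x := x)).2 hr.le
  refine (isPreconnected_sphere h x r).infinite_of_nontrivial ⟨u, hu, x - (u - x), ?_, ?_⟩
  · simpa [mem_sphere_iff_norm, norm_sub_rev] using hu
  · intro hux
    have : u = x := by linear_combination (norm := module) (2⁻¹ : ℝ) • hux
    simp [this, hr.ne] at hu

theorem cubeGraph_unit_distance_general (d : ℕ) :
    ∃ f : (Fin d → Bool) → EuclideanSpace ℝ (Fin 2),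
      Function.Injective f ∧
      ∀ x y, (cubeGraph d).Adj x y → dist (f x) (f y) = 1 := by
  have hrank : 1 < Module.rank ℝ (EuclideanSpace ℝ (Fin 2)) := by
    rw [← Module.finrank_eq_rank, finrank_euclideanSpace_fin]; norm_num
  obtain ⟨v, hv, hinj⟩ := exists_injective_subsetSum (sphere_infinite hrank 0 one_pos) d
  refine ⟨subsetSum v, hinj, fun x y hxy => ?_⟩
  obtain ⟨i, hi, hrest⟩ := cubeGraph_adj_iff.1 hxy
  rw [dist_eq_norm, norm_subsetSum_sub_subsetSum hi hrest, ← mem_sphere_zero_iff_norm]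
  exact hv i

/-- For every `d ≥ 1`, the hypercube graph `Q_d` is a unit-distance graph in the plane:
there is an injective map of its vertices into `ℝ²` sending adjacent vertices to points
at Euclidean distance 1. -/
theorem cubeGraph_unit_distance (d : ℕ) (hd : 1 ≤ d) :
    ∃ f : (Fin d → Bool) → EuclideanSpace ℝ (Fin 2),
      Function.Injective f ∧
      ∀ x y, (cubeGraph d).Adj x y → dist (f x) (f y) = 1 :=
  cubeGraph_unit_distance_general d
end

section
/- For every odd m ≥ 3 and every d ≥ 0, the Cartesian (box) product C_m □ Q_d of the cycle of length m with the d-dimensional hypercube graph is a unit-distance graph in the plane: there exists an injective map f : ZMod m × (Fin d → Bool) → ℝ² such that any two vertices adjacent in C_m □ Q_d have images at Euclidean distance 1. (This graph is (d+2)-regular with m·2^d vertices, so for any N and any k > 2 it yields k-regular unit-distance graphs on more than N vertices.) -/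
open SimpleGraph

/-- The cycle graph `C_m` on `ZMod m`: `i` adjacent to `j` iff `i - j = ±1`. -/
def cycleGraph' (m : ℕ) : SimpleGraph (ZMod m) where
  Adj i j := i ≠ j ∧ (i - j = 1 ∨ j - i = 1)
  symm := ⟨fun _ _ h => ⟨h.1.symm, h.2.symm⟩⟩
  loopless := ⟨fun _ h => h.1 rfl⟩

/-! A primitive `m`-th root of unity `ζ` gives the regular `m`-gon `k ↦ ζ ^ k / (1 - ζ)` with unit
sides. If `f` and `g` are injective unit-distance maps of finite graphs `G` and `H` into `ℂ`, then
so is `(x, y) ↦ f x + u * g y` for `G □ H`, as soon as the unit `u` avoids the finitely many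
quotients `(f x - f x') / (g y' - g y)`. Since `Q_(d+1) ≅ K_2 □ Q_d`, this realises every `Q_d`,
and one more step realises `C_m □ Q_d`. -/

def IsUnitDistanceMap {V E : Type*} [Dist E] (G : SimpleGraph V) (f : V → E) : Prop :=
  Function.Injective f ∧ ∀ x y, G.Adj x y → dist (f x) (f y) = 1

theorem isUnitDistanceMap_top_bool :
    IsUnitDistanceMap (⊤ : SimpleGraph Bool) (fun b => if b then (1 : ℂ) else 0) := by
  refine ⟨fun b c h => ?_, fun b c h => ?_⟩ <;> cases b <;> cases c <;> simp_all

theorem Complex.exists_norm_eq_one_notMem {S : Set ℂ} (hS : S.Finite) :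
    ∃ u : ℂ, ‖u‖ = 1 ∧ u ∉ S := by
  have hsphere : (Metric.sphere (0 : ℂ) 1).Infinite :=
    (isPreconnected_sphere (by simp [Complex.rank_real_complex]) 0 1).infinite_of_nontrivial
      ⟨1, by simp, -1, by simp, by norm_num⟩
  obtain ⟨u, hu, huS⟩ := (hsphere.sdiff hS).nonempty
  exact ⟨u, by simpa using hu, huS⟩

namespace IsUnitDistanceMap

variable {V W E F : Type*} {G : SimpleGraph V} {H : SimpleGraph W}

theorem of_subsingleton [Dist E] [Subsingleton V] (f : V → E) : IsUnitDistanceMap G f :=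
  ⟨Function.injective_of_subsingleton f, fun x y h => (G.ne_of_adj h (Subsingleton.elim x y)).elim⟩

theorem comp_embedding [Dist E] {f : W → E} (hf : IsUnitDistanceMap H f) (φ : G ↪g H) :
    IsUnitDistanceMap G (f ∘ φ) :=
  ⟨hf.1.comp φ.injective, fun _ _ h => hf.2 _ _ (φ.map_adj_iff.mpr h)⟩

theorem isometry_comp [MetricSpace E] [PseudoMetricSpace F] {f : V → E} {e : E → F}
    (hf : IsUnitDistanceMap G f) (he : Isometry e) : IsUnitDistanceMap G (e ∘ f) :=
  ⟨he.injective.comp hf.1, fun x y h => (he.dist_eq _ _).trans (hf.2 x y h)⟩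

theorem boxProd [Finite V] [Finite W] {f : V → ℂ} {g : W → ℂ} (hf : IsUnitDistanceMap G f)
    (hg : IsUnitDistanceMap H g) :
    ∃ u : ℂ, ‖u‖ = 1 ∧ IsUnitDistanceMap (G □ H) (fun p => f p.1 + u * g p.2) := by
  obtain ⟨u, hu, hbad⟩ := Complex.exists_norm_eq_one_notMem
    (Set.finite_range fun p : (V × V) × (W × W) => (f p.1.1 - f p.1.2) / (g p.2.2 - g p.2.1))
  refine ⟨u, hu, ?_, ?_⟩
  · rintro ⟨x, y⟩ ⟨x', y'⟩ h
    by_cases hy : y = y'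
    · subst hy
      exact Prod.ext (hf.1 (add_right_cancel h)) rfl
    · have hg' : g y' - g y ≠ 0 := sub_ne_zero.mpr (hg.1.ne (Ne.symm hy))
      refine (hbad ⟨((x, x'), (y, y')), ?_⟩).elim
      rw [div_eq_iff hg']
      linear_combination h
  · rintro ⟨x, y⟩ ⟨x', y'⟩ (⟨hx, rfl⟩ | ⟨hy, rfl⟩)
    · rw [dist_add_right]
      exact hf.2 x x' hx
    · rw [dist_add_left, dist_eq_norm, ← mul_sub, norm_mul, hu, one_mul, ← dist_eq_norm]
      exact hg.2 y y' hy

end IsUnitDistanceMap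

theorem cubeGraph_succ_adj_cons {d : ℕ} {b c : Bool} {x y : Fin d → Bool} :
    (cubeGraph (d + 1)).Adj (Fin.cons b x : Fin (d + 1) → Bool) (Fin.cons c y) ↔
      b ≠ c ∧ x = y ∨ (cubeGraph d).Adj x y ∧ b = c := by
  have hx : (Finset.univ.filter fun i => x i ≠ y i).card = 0 ↔ x = y := by
    simp [Finset.filter_eq_empty_iff, funext_iff]
  change (Finset.univ.filter fun i =>
      (Fin.cons b x : Fin (d + 1) → Bool) i ≠ (Fin.cons c y : Fin (d + 1) → Bool) i).card = 1 ↔ _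
  rw [Fin.card_filter_univ_succ']
  simp only [Fin.cons_zero, Fin.cons_succ]
  by_cases hbc : b = c
  · simp [hbc, cubeGraph]
  · simp [hbc, hx]

def cubeGraphSuccIso (d : ℕ) : ((⊤ : SimpleGraph Bool) □ cubeGraph d) ≃g cubeGraph (d + 1) where
  toEquiv := Fin.consEquiv fun _ => Bool
  map_rel_iff' := cubeGraph_succ_adj_cons

theorem exists_isUnitDistanceMap_cubeGraph (d : ℕ) :
    ∃ f : (Fin d → Bool) → ℂ, IsUnitDistanceMap (cubeGraph d) f := by
  induction d with
  | zero => exact ⟨fun _ => 0, .of_subsingleton _⟩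
  | succ d ih =>
    obtain ⟨g, hg⟩ := ih
    obtain ⟨u, -, hu⟩ := isUnitDistanceMap_top_bool.boxProd hg
    exact ⟨_, hu.comp_embedding (cubeGraphSuccIso d).symm.toEmbedding⟩

theorem IsPrimitiveRoot.pow_val_add_one {M : Type*} [CommMonoid M] {ζ : M} {m : ℕ}
    [Fact (1 < m)] (hζ : IsPrimitiveRoot ζ m) (k : ZMod m) : ζ ^ (k + 1).val = ζ ^ k.val * ζ := by
  rw [ZMod.val_add, ZMod.val_one, ← pow_eq_pow_mod _ hζ.pow_eq_one, pow_succ]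

theorem isUnitDistanceMap_cycleGraph' {m : ℕ} (hm : 1 < m) {ζ : ℂ} (hζ : IsPrimitiveRoot ζ m) :
    IsUnitDistanceMap (cycleGraph' m) (fun k => ζ ^ k.val / (1 - ζ)) := by
  have : Fact (1 < m) := ⟨hm⟩
  have hζ1 : 1 - ζ ≠ 0 := sub_ne_zero.mpr (hζ.ne_one hm).symm
  have hstep (k : ZMod m) : ‖ζ ^ k.val / (1 - ζ) - ζ ^ (k + 1).val / (1 - ζ)‖ = 1 := by
    rw [hζ.pow_val_add_one, ← sub_div, ← mul_one_sub, mul_div_cancel_right₀ _ hζ1, norm_pow,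
      hζ.norm'_eq_one (NeZero.ne m), one_pow]
  refine ⟨fun i j h => ?_, fun i j h => ?_⟩
  · exact ZMod.val_injective m
      (hζ.pow_inj (ZMod.val_lt i) (ZMod.val_lt j) ((div_left_inj' hζ1).mp h))
  · rw [dist_eq_norm]
    obtain ⟨-, h | h⟩ := h
    · obtain rfl : i = j + 1 := eq_add_of_sub_eq' h
      rw [norm_sub_rev]
      exact hstep j
    · obtain rfl : j = i + 1 := eq_add_of_sub_eq' h
      exact hstep i

theorem cycle_boxProd_cube_unit_distance_general (m d : ℕ) (hm : 3 ≤ m) :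
    ∃ f : ZMod m × (Fin d → Bool) → EuclideanSpace ℝ (Fin 2),
      Function.Injective f ∧
      ∀ x y, (cycleGraph' m □ cubeGraph d).Adj x y → dist (f x) (f y) = 1 := by
  have : NeZero m := ⟨by omega⟩
  have hcycle := isUnitDistanceMap_cycleGraph' (by omega) (Complex.isPrimitiveRoot_exp m (by omega))
  obtain ⟨g, hcube⟩ := exists_isUnitDistanceMap_cubeGraph d
  obtain ⟨u, -, hbox⟩ := hcycle.boxProd hcube
  exact ⟨_, hbox.isometry_comp Complex.orthonormalBasisOneI.repr.isometry⟩

/-- For every odd `m ≥ 3` and every `d ≥ 0` the Cartesian (box) product `C_m □ Q_d` of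
the cycle of length `m` with the `d`-dimensional hypercube graph is a unit-distance graph
in the plane: there is an injective map of its vertices into `ℝ²` sending adjacent
vertices to points at Euclidean distance 1. -/
theorem cycle_boxProd_cube_unit_distance (m d : ℕ) (hm : 3 ≤ m) (hodd : Odd m) :
    ∃ f : ZMod m × (Fin d → Bool) → EuclideanSpace ℝ (Fin 2),
      Function.Injective f ∧
      ∀ x y, (cycleGraph' m □ cubeGraph d).Adj x y → dist (f x) (f y) = 1 :=
  cycle_boxProd_cube_unit_distance_general m d hm
end
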